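/- arXiv:1404.1183 — 3 statements merged into one kernel-verified Lean document; each statement's English description precedes it below -/
import Mathlib

section
/- Let n be even, and let f, g ∈ ℂⁿ be discrete signals. Let (ψ_j)_{j∈ℤ} be discrete Cauchy wavelets with ψ̂_j[k] = ρ(a^j k)(a^j k)^p e^{-a^j k} 1_{k ≥ 0} for k = -n/2+1, ..., n/2, where p > 0, a > 1, and ρ : ℝ⁺ → ℂ is non-vanishing with ρ(ax) = ρ(x). Then for two distinct integers j ≠ l, the equalities |f ⋆ ψ_j| = |g ⋆ ψ_j| and |f ⋆ ψ_l| = |g ⋆ ψ_l| hold if and only if there exist φ ∈ ℝ and c ∈ ℂ such that f₊ = e^{iφ} g₊ + c. -/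
open Complex Real

noncomputable section

/-- Discrete Fourier transform `f̂[k] = Σ_{s=0}^{n-1} f[s] e^{-2πisk/n}`. -/
def dft (n : ℕ) (f : Fin n → ℂ) (k : ℤ) : ℂ :=
  ∑ s : Fin n, f s * Complex.exp (-2 * π * Complex.I * (s : ℕ) * k / n)

/-- The frequencies `k = -n/2 + 1, ..., n/2`. -/
def freqs (n : ℕ) : Finset ℤ := Finset.Icc (-(n : ℤ) / 2 + 1) ((n : ℤ) / 2)

/-- Inverse discrete Fourier transform from frequency data on `freqs n`. -/
def idft (n : ℕ) (F : ℤ → ℂ) (s : Fin n) : ℂ :=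
  (1 / (n : ℂ)) * ∑ k ∈ freqs n, F k * Complex.exp (2 * π * Complex.I * k * (s : ℕ) / n)

/-- Discrete Cauchy wavelet in the Fourier domain:
`ψ̂_j[k] = ρ(a^j k) (a^j k)^p e^{-a^j k} 1_{k ≥ 0}`. -/
def dCauchyHat (a p : ℝ) (ρ : ℝ → ℂ) (j k : ℤ) : ℂ :=
  if 0 ≤ k then
    ρ (a ^ j * k) * (((a ^ j * k) ^ p : ℝ) : ℂ) * (Real.exp (-(a ^ j * k)) : ℂ)
  else 0

/-- Circular convolution of `f` with the wavelet `ψ_j`, via Fourier multiplication. -/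
def dConv (n : ℕ) (a p : ℝ) (ρ : ℝ → ℂ) (j : ℤ) (f : Fin n → ℂ) (s : Fin n) : ℂ :=
  idft n (fun k => dft n f k * dCauchyHat a p ρ j k) s

/-- The discrete analytic part `f₊`, defined through its DFT:
`f̂₊[k] = 0` for `k < 0`, `f̂₊[k] = f̂[k]` for `k = 0` or `k = n/2`, `f̂₊[k] = 2 f̂[k]`
for `0 < k < n/2`. -/
def dAnalyticPart (n : ℕ) (f : Fin n → ℂ) (s : Fin n) : ℂ :=
  idft n (fun k =>
    (if k < 0 then 0 else if k = 0 ∨ k = (n : ℤ) / 2 then 1 else 2) * dft n f k) s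


/-!
At scale `j` the wavelet transform of `f` samples, up to a nonzero factor, the function
`z ↦ z * P_f z` at the `n` equispaced points of the circle `|z| = exp (-a ^ j)`, where the
polynomial `P_f` has coefficients `ρ k * k ^ p * f̂[k]`; the periodicity of `ρ` is what makes
`P_f` independent of the scale. Equal moduli on a circle `z * conj z = t` give
`P_f * P_f^t = P_g * P_g^t`, with `P^t z = z ^ M * conj (P (t / conj z))`: both sides have
degree `< n` and agree at `n` points. Two such identities for `t₁ ≠ t₂` make the reflected
polynomials `A = P_f^t₁`, `B = P_g^t₁` satisfy `A z * B (μ z) = A (μ z) * B z` with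
`μ = t₁ / t₂` not a root of unity, which forces `B = c * A`. Hence `P_f = e^{iφ} P_g`, that is
`f̂ = e^{iφ} ĝ` at the positive frequencies, which is exactly `f₊ = e^{iφ} g₊ + c`.
-/

open Polynomial
open scoped ComplexConjugate

section ScaleInvariance

variable {K : Type*} [Field K] {μ : K}

theorem natDegree_eq_of_mul_comp_C_mul_X_eq (hμ : Function.Injective (μ ^ · : ℕ → K))
    {A B : K[X]} (hA : A ≠ 0) (hB : B ≠ 0)
    (h : A * B.comp (C μ * X) = A.comp (C μ * X) * B) : B.natDegree = A.natDegree := by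
  have hμ0 : μ ≠ 0 := by
    rintro rfl
    exact absurd (@hμ 1 2 (by simp)) (by norm_num)
  have hlc := congrArg leadingCoeff h
  have hdeg : (C μ * X).natDegree ≠ 0 := by rw [natDegree_C_mul_X μ hμ0]; exact one_ne_zero
  rw [leadingCoeff_mul, leadingCoeff_mul, leadingCoeff_comp hdeg, leadingCoeff_comp hdeg,
    leadingCoeff_C_mul_X] at hlc
  apply hμ
  have hAB : A.leadingCoeff * B.leadingCoeff ≠ 0 := by simp [hA, hB]
  apply mul_left_cancel₀ hAB
  linear_combination hlc

theorem exists_eq_C_mul_of_mul_comp_C_mul_X_eq (hμ : Function.Injective (μ ^ · : ℕ → K))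
    {A B : K[X]} (hA : A ≠ 0) (h : A * B.comp (C μ * X) = A.comp (C μ * X) * B) :
    ∃ c, B = C c * A := by
  set c := B.leadingCoeff / A.leadingCoeff
  refine ⟨c, ?_⟩
  have hcoeff : B.coeff A.natDegree = c * A.leadingCoeff := by
    rcases eq_or_ne B 0 with rfl | hB
    · simp [c]
    · rw [← natDegree_eq_of_mul_comp_C_mul_X_eq hμ hA hB h, ← leadingCoeff,
        div_mul_cancel₀ _ (leadingCoeff_ne_zero.mpr hA)]
  -- `B - c • A` satisfies `h` as well, but its degree is below that of `A` unless it vanishes.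
  by_contra hne
  have hR : B - C c * A ≠ 0 := sub_ne_zero.mpr hne
  have hRdeg := natDegree_eq_of_mul_comp_C_mul_X_eq hμ hA hR (by
    simp only [sub_comp, mul_comp, C_comp]
    linear_combination h)
  apply leadingCoeff_ne_zero.mpr hR
  rw [leadingCoeff, hRdeg, coeff_sub, coeff_C_mul, hcoeff, leadingCoeff, sub_self]

end ScaleInvariance

/-- The polynomial `z ↦ z ^ M * conj (P (t / conj z))`, written out for `natDegree P ≤ M`. -/
def conjReflect (M : ℕ) (t : ℝ) (P : ℂ[X]) : ℂ[X] :=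
  ∑ k ∈ Finset.range (M + 1), C (conj (P.coeff k) * (t : ℂ) ^ k) * X ^ (M - k)

section ConjReflect

variable {M : ℕ} {t : ℝ} {P : ℂ[X]}

theorem natDegree_conjReflect_le : (conjReflect M t P).natDegree ≤ M :=
  natDegree_sum_le_of_forall_le _ _ fun _ _ =>
    (natDegree_C_mul_X_pow_le _ _).trans (Nat.sub_le _ _)

theorem coeff_conjReflect_sub {k : ℕ} (hk : k ≤ M) :
    (conjReflect M t P).coeff (M - k) = conj (P.coeff k) * (t : ℂ) ^ k := by
  rw [conjReflect, finsetSum_coeff, Finset.sum_eq_single k]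
  · rw [coeff_C_mul_X_pow, if_pos rfl]
  · intro i hi hik
    rw [coeff_C_mul_X_pow, if_neg]
    rw [Finset.mem_range] at hi
    omega
  · intro hk'
    exact absurd (Finset.mem_range.mpr (Nat.lt_succ_of_le hk)) hk'

theorem conjReflect_ne_zero (ht : t ≠ 0) (hP : P.natDegree ≤ M) (hP0 : P ≠ 0) :
    conjReflect M t P ≠ 0 := by
  intro h
  apply hP0
  ext k
  rcases le_or_gt k M with hk | hk
  · have := coeff_conjReflect_sub (t := t) (P := P) hk
    rw [h, coeff_zero, eq_comm, mul_eq_zero, map_eq_zero] at this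
    simpa [ht] using this
  · exact coeff_eq_zero_of_natDegree_lt (hP.trans_lt hk)

theorem conjReflect_C_mul (c : ℂ) :
    conjReflect M t (C c * P) = C (conj c) * conjReflect M t P := by
  simp only [conjReflect, coeff_C_mul, Finset.mul_sum, map_mul]
  exact Finset.sum_congr rfl fun _ _ => by ring

theorem conjReflect_eq_C_mul_comp {t₁ t₂ : ℝ} (ht₁ : t₁ ≠ 0) (ht₂ : t₂ ≠ 0) :
    conjReflect M t₂ P =
      C (((t₂ / t₁ : ℝ) : ℂ) ^ M) * (conjReflect M t₁ P).comp (C ((t₁ / t₂ : ℝ) : ℂ) * X) := by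
  simp only [conjReflect, sum_comp, mul_comp, C_comp, X_pow_comp, mul_pow, ← C_pow,
    Finset.mul_sum, ← mul_assoc, ← C_mul]
  refine Finset.sum_congr rfl fun k hk => ?_
  congr 2
  have hkM : k ≤ M := Nat.lt_succ_iff.mp (Finset.mem_range.mp hk)
  have h₁ : (t₁ : ℂ) ≠ 0 := Complex.ofReal_ne_zero.mpr ht₁
  have h₂ : (t₂ : ℂ) ≠ 0 := Complex.ofReal_ne_zero.mpr ht₂
  push_cast
  rw [← Nat.sub_add_cancel hkM, pow_add, Nat.add_sub_cancel, div_pow, div_pow, div_pow]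
  field_simp

theorem eval_conjReflect (hP : P.natDegree ≤ M) {z : ℂ} (hz : z * conj z = t) :
    (conjReflect M t P).eval z = z ^ M * conj (P.eval z) := by
  rw [eval_eq_sum_range' (Nat.lt_succ_of_le hP), map_sum, Finset.mul_sum, conjReflect,
    eval_finsetSum]
  refine Finset.sum_congr rfl fun k hk => ?_
  have hkM : k ≤ M := Nat.lt_succ_iff.mp (Finset.mem_range.mp hk)
  rw [← hz, ← Nat.sub_add_cancel hkM]
  simp only [eval_mul, eval_C, eval_pow, eval_X, map_mul, map_pow, Nat.add_sub_cancel]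
  ring

end ConjReflect

theorem mul_conjReflect_eq_of_norm_eval_eq {M : ℕ} {P Q : ℂ[X]} (hP : P.natDegree ≤ M)
    (hQ : Q.natDegree ≤ M) {ι : Type*} [Fintype ι] (hcard : 2 * M < Fintype.card ι)
    {x : ι → ℂ} (hx : Function.Injective x) {r : ℝ} (hxr : ∀ i, ‖x i‖ = r)
    (h : ∀ i, ‖P.eval (x i)‖ = ‖Q.eval (x i)‖) :
    P * conjReflect M (r ^ 2) P = Q * conjReflect M (r ^ 2) Q := by
  have hdeg : ∀ R : ℂ[X], R.natDegree ≤ M → (R * conjReflect M (r ^ 2) R).natDegree ≤ 2 * M :=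
    fun R hR => natDegree_mul_le.trans
      (by linarith [natDegree_conjReflect_le (M := M) (t := r ^ 2) (P := R)])
  refine eq_of_natDegree_lt_card_of_eval_eq _ _ hx (fun i => ?_)
    (max_le (hdeg P hP) (hdeg Q hQ) |>.trans_lt hcard)
  have hxi : x i * conj (x i) = ((r ^ 2 : ℝ) : ℂ) := by
    rw [Complex.mul_conj', hxr]
    push_cast
    rfl
  simp only [eval_mul, eval_conjReflect hP hxi, eval_conjReflect hQ hxi,
    mul_left_comm _ (x i ^ M), Complex.mul_conj', h i]

theorem exists_eq_C_exp_mul_of_mul_conjReflect_eq {M : ℕ} {P Q : ℂ[X]}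
    (hP : P.natDegree ≤ M) (hQ : Q.natDegree ≤ M) {t₁ t₂ : ℝ} (ht₁ : 0 < t₁) (ht₂ : 0 < t₂)
    (ht : t₁ ≠ t₂) (h₁ : P * conjReflect M t₁ P = Q * conjReflect M t₁ Q)
    (h₂ : P * conjReflect M t₂ P = Q * conjReflect M t₂ Q) :
    ∃ φ : ℝ, P = C (Complex.exp (Complex.I * φ)) * Q := by
  rcases eq_or_ne Q 0 with rfl | hQ0
  · refine ⟨0, ?_⟩
    rw [mul_zero]
    by_contra hP0
    rw [zero_mul] at h₁
    exact mul_ne_zero hP0 (conjReflect_ne_zero ht₁.ne' hP hP0) h₁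
  set A := conjReflect M t₁ P
  set B := conjReflect M t₁ Q
  have hB : B ≠ 0 := conjReflect_ne_zero ht₁.ne' hQ hQ0
  have hP0 : P ≠ 0 := by
    rintro rfl
    exact mul_ne_zero hQ0 hB (by rw [← h₁, zero_mul])
  have hA : A ≠ 0 := conjReflect_ne_zero ht₁.ne' hP hP0
  set μ : ℂ := ((t₁ / t₂ : ℝ) : ℂ)
  have hμ : Function.Injective (μ ^ · : ℕ → ℂ) := fun i k hik =>
    pow_right_injective₀ (div_pos ht₁ ht₂) (by rwa [ne_eq, div_eq_one_iff_eq ht₂.ne'])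
      (Complex.ofReal_injective (by simpa [μ] using hik))
  have hAB : A * B.comp (C μ * X) = A.comp (C μ * X) * B := by
    have hscale : C (((t₂ / t₁ : ℝ) : ℂ) ^ M) ≠ 0 := by simp [ht₁.ne', ht₂.ne']
    rw [conjReflect_eq_C_mul_comp ht₁.ne' ht₂.ne', conjReflect_eq_C_mul_comp ht₁.ne' ht₂.ne']
      at h₂
    apply mul_left_cancel₀ (mul_ne_zero (mul_ne_zero hP0 hQ0) hscale)
    linear_combination
      (Q * C (((t₂ / t₁ : ℝ) : ℂ) ^ M) * B.comp (C μ * X)) * h₁ - (Q * B) * h₂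
  obtain ⟨c, hc⟩ := exists_eq_C_mul_of_mul_comp_C_mul_X_eq hμ hA hAB
  have hPQ : P = C c * Q := mul_right_cancel₀ hA (by rw [h₁, hc]; ring)
  have hc1 : ‖c‖ = 1 := by
    have hcc : C (c * conj c) * B = B := by
      rw [C_mul, mul_assoc, ← conjReflect_C_mul, ← hPQ, ← hc]
    have hcc1 : c * conj c = 1 :=
      C_injective ((mul_eq_right₀ hB).mp hcc |>.trans C_1.symm)
    rw [Complex.mul_conj', ← Complex.ofReal_pow, Complex.ofReal_eq_one] at hcc1
    exact (pow_eq_one_iff_of_nonneg (norm_nonneg c) two_ne_zero).mp hcc1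
  obtain ⟨θ, rfl⟩ := (Complex.norm_eq_one_iff c).mp hc1
  exact ⟨θ, by rw [hPQ, mul_comm Complex.I]⟩

theorem sum_exp_two_pi_mul_I_eq_ite {n : ℕ} (hn : 0 < n) (m : ℤ) :
    ∑ s : Fin n, Complex.exp (2 * π * I * m * (s : ℕ) / n) =
      if (n : ℤ) ∣ m then (n : ℂ) else 0 := by
  set ζ := Complex.exp (2 * π * I / n)
  have hζ : IsPrimitiveRoot ζ n := Complex.isPrimitiveRoot_exp n hn.ne'
  have hterm : ∀ s : ℕ, Complex.exp (2 * π * I * m * s / n) = (ζ ^ m) ^ s := by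
    intro s
    rw [← zpow_natCast, ← zpow_mul, ← Complex.exp_int_mul]
    congr 1
    push_cast
    ring
  simp_rw [hterm]
  rw [Fin.sum_univ_eq_sum_range (fun s => (ζ ^ m) ^ s)]
  split_ifs with hdvd
  · simp [(hζ.zpow_eq_one_iff_dvd m).mpr hdvd]
  · have hne : ζ ^ m ≠ 1 := mt (hζ.zpow_eq_one_iff_dvd m).mp hdvd
    rw [geom_sum_eq hne, ← zpow_natCast, ← zpow_mul, mul_comm, zpow_mul, zpow_natCast,
      hζ.pow_eq_one, one_zpow, sub_self, zero_div]

theorem eq_of_mem_freqs_of_dvd_sub {n : ℕ} {k k' : ℤ} (hk : k ∈ freqs n)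
    (hk' : k' ∈ freqs n) (h : (n : ℤ) ∣ k - k') : k = k' := by
  rw [freqs, Finset.mem_Icc] at hk hk'
  have := Int.eq_zero_of_abs_lt_dvd h (abs_lt.mpr ⟨by omega, by omega⟩)
  omega

theorem zero_mem_freqs {n : ℕ} (hn : 0 < n) : 0 ∈ freqs n := by
  rw [freqs, Finset.mem_Icc]
  omega

theorem sum_freqs_eq_sum_range {n : ℕ} {T : ℤ → ℂ} (hT : ∀ k ≤ 0, T k = 0) :
    ∑ k ∈ freqs n, T k = ∑ k ∈ Finset.range (n / 2), T (k + 1) := by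
  rw [← Finset.sum_image (g := fun k : ℕ => (k : ℤ) + 1) (by intro _ _ _ _ h; simpa using h)]
  refine (Finset.sum_subset ?_ fun k hk hk' => hT k ?_).symm
  · intro k hk
    obtain ⟨m, hm, rfl⟩ := Finset.mem_image.mp hk
    rw [Finset.mem_range] at hm
    rw [freqs, Finset.mem_Icc]
    omega
  · by_contra hpos
    refine hk' (Finset.mem_image.mpr ⟨(k - 1).toNat, ?_, by omega⟩)
    rw [freqs, Finset.mem_Icc] at hk
    rw [Finset.mem_range]
    omega

theorem dft_idft {n : ℕ} (hn : 0 < n) (F : ℤ → ℂ) {k₀ : ℤ} (hk₀ : k₀ ∈ freqs n) :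
    dft n (idft n F) k₀ = F k₀ := by
  have hterm : ∀ (k : ℤ) (s : Fin n), Complex.exp (2 * π * I * k * (s : ℕ) / n) *
      Complex.exp (-2 * π * I * (s : ℕ) * k₀ / n) =
      Complex.exp (2 * π * I * ((k - k₀ : ℤ) : ℂ) * (s : ℕ) / n) := by
    intro k s
    rw [← Complex.exp_add]
    congr 1
    push_cast
    ring
  calc dft n (idft n F) k₀
      = ∑ k ∈ freqs n, 1 / (n : ℂ) * F k *
          ∑ s : Fin n, Complex.exp (2 * π * I * ((k - k₀ : ℤ) : ℂ) * (s : ℕ) / n) := by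
        simp only [dft, idft, Finset.sum_mul, Finset.mul_sum]
        rw [Finset.sum_comm]
        refine Finset.sum_congr rfl fun k _ => Finset.sum_congr rfl fun s _ => ?_
        rw [← hterm]
        ring
    _ = ∑ k ∈ freqs n, 1 / (n : ℂ) * F k * if (n : ℤ) ∣ k - k₀ then (n : ℂ) else 0 := by
        simp only [sum_exp_two_pi_mul_I_eq_ite hn]
    _ = F k₀ := by
        rw [Finset.sum_eq_single_of_mem k₀ hk₀, sub_self, if_pos (dvd_zero _)]
        · have hn' : (n : ℂ) ≠ 0 := Nat.cast_ne_zero.mpr hn.ne'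
          field_simp
        · intro k hk hkk₀
          rw [if_neg (mt (eq_of_mem_freqs_of_dvd_sub hk hk₀) hkk₀), mul_zero]

theorem dft_const_of_ne_zero {n : ℕ} (hn : 0 < n) (c : ℂ) {k : ℤ} (hk : k ∈ freqs n)
    (hk0 : k ≠ 0) : dft n (fun _ => c) k = 0 := by
  have hndvd : ¬ (n : ℤ) ∣ -k := fun h =>
    hk0 (eq_of_mem_freqs_of_dvd_sub hk (zero_mem_freqs hn) (by simpa using h))
  have hsum := sum_exp_two_pi_mul_I_eq_ite hn (-k)
  rw [if_neg hndvd] at hsum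
  rw [dft, ← Finset.mul_sum, ← mul_zero c, ← hsum]
  congr 1
  refine Finset.sum_congr rfl fun s _ => ?_
  congr 1
  push_cast
  ring

theorem exists_idft_eq_const_iff {n : ℕ} (hn : 0 < n) (F : ℤ → ℂ) :
    (∃ c, ∀ s, idft n F s = c) ↔ ∀ k ∈ freqs n, k ≠ 0 → F k = 0 := by
  constructor
  · rintro ⟨c, hc⟩ k hk hk0
    rw [← dft_idft hn F hk, funext hc]
    exact dft_const_of_ne_zero hn c hk hk0
  · intro hF
    refine ⟨1 / n * F 0, fun s => ?_⟩
    rw [idft, Finset.sum_eq_single_of_mem 0 (zero_mem_freqs hn)]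
    · simp
    · intro k hk hk0
      rw [hF k hk hk0, zero_mul]

theorem exists_dAnalyticPart_eq_iff {n : ℕ} (hn : 0 < n) (f g : Fin n → ℂ) (e : ℂ) :
    (∃ c, ∀ s, dAnalyticPart n f s = e * dAnalyticPart n g s + c) ↔
      ∀ k < n / 2, dft n f (k + 1) = e * dft n g (k + 1) := by
  set W : ℤ → ℂ := fun k => if k < 0 then 0 else if k = 0 ∨ k = (n : ℤ) / 2 then 1 else 2
  have hsub : ∀ s, dAnalyticPart n f s - e * dAnalyticPart n g s =
      idft n (fun k => W k * (dft n f k - e * dft n g k)) s := by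
    intro s
    simp only [dAnalyticPart, idft, Finset.mul_sum, ← Finset.sum_sub_distrib]
    exact Finset.sum_congr rfl fun k _ => by ring
  have hW : ∀ k : ℤ, 0 < k → W k ≠ 0 := by
    intro k hk
    simp only [W, if_neg (not_lt.mpr hk.le)]
    split_ifs <;> norm_num
  calc (∃ c, ∀ s, dAnalyticPart n f s = e * dAnalyticPart n g s + c)
      ↔ ∃ c, ∀ s, idft n (fun k => W k * (dft n f k - e * dft n g k)) s = c := by
        simp only [← hsub, sub_eq_iff_eq_add']
    _ ↔ ∀ k ∈ freqs n, k ≠ 0 → W k * (dft n f k - e * dft n g k) = 0 :=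
        exists_idft_eq_const_iff hn _
    _ ↔ ∀ k < n / 2, dft n f (k + 1) = e * dft n g (k + 1) := by
        constructor
        · intro h k hk
          have hmem : (k : ℤ) + 1 ∈ freqs n := by
            rw [freqs, Finset.mem_Icc]
            omega
          have := h _ hmem (by omega)
          rwa [mul_eq_zero, or_iff_right (hW _ (by omega)), sub_eq_zero] at this
        · intro h k hk hk0
          rcases lt_or_gt_of_ne hk0 with hneg | hpos
          · simp [W, hneg]
          · obtain ⟨m, rfl⟩ : ∃ m : ℕ, k = m + 1 := ⟨(k - 1).toNat, by omega⟩
            rw [freqs, Finset.mem_Icc] at hk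
            rw [h m (by omega), sub_self, mul_zero]

theorem apply_zpow_mul_eq {a : ℝ} (ha : 0 < a) {ρ : ℝ → ℂ}
    (hρ : ∀ x, 0 ≤ x → ρ (a * x) = ρ x) (j : ℤ) {x : ℝ} (hx : 0 ≤ x) : ρ (a ^ j * x) = ρ x := by
  induction j using Int.induction_on with
  | zero => rw [zpow_zero, one_mul]
  | succ i ih =>
    rw [zpow_add_one₀ ha.ne', mul_comm _ a, mul_assoc, hρ _ (by positivity), ih]
  | pred i ih =>
    rw [← ih, ← hρ _ (by positivity), ← mul_assoc, ← zpow_one_add₀ ha.ne', add_sub_cancel]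

theorem dCauchyHat_of_nonpos {a p : ℝ} (hp : 0 < p) (ρ : ℝ → ℂ) (j : ℤ) {k : ℤ}
    (hk : k ≤ 0) :
    dCauchyHat a p ρ j k = 0 := by
  rcases hk.lt_or_eq with hk | rfl
  · rw [dCauchyHat, if_neg (not_le.mpr hk)]
  · simp [dCauchyHat, Real.zero_rpow hp.ne']

theorem dCauchyHat_natCast_add_one {a p : ℝ} (ha : 0 < a) {ρ : ℝ → ℂ}
    (hρ : ∀ x, 0 ≤ x → ρ (a * x) = ρ x) (j : ℤ) (k : ℕ) :
    dCauchyHat a p ρ j (k + 1) = ((a ^ j) ^ p : ℝ) * ρ (k + 1) * ((k + 1 : ℝ) ^ p : ℝ) *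
      (Real.exp (-a ^ j) : ℂ) ^ (k + 1) := by
  have hexp : Real.exp (-(a ^ j * (k + 1))) = Real.exp (-a ^ j) ^ (k + 1) := by
    rw [← Real.exp_nat_mul]
    push_cast
    ring_nf
  rw [dCauchyHat, if_pos (by positivity)]
  simp only [Int.cast_add, Int.cast_natCast, Int.cast_one]
  rw [apply_zpow_mul_eq ha hρ j (by positivity), Real.mul_rpow (by positivity) (by positivity),
    hexp]
  push_cast
  ring

/-- Coefficient `k` carries frequency `k + 1`: frequency `0` is killed by `0 ^ p = 0`, and the
shift keeps the degree below `n / 2`, as the sampling argument needs. -/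
def cauchyPoly (n : ℕ) (p : ℝ) (ρ : ℝ → ℂ) (f : Fin n → ℂ) : ℂ[X] :=
  ∑ k ∈ Finset.range (n / 2), C (ρ (k + 1) * ((k + 1 : ℝ) ^ p : ℝ) * dft n f (k + 1)) * X ^ k

theorem coeff_cauchyPoly (n : ℕ) (p : ℝ) (ρ : ℝ → ℂ) (f : Fin n → ℂ) (k : ℕ) :
    (cauchyPoly n p ρ f).coeff k =
      if k < n / 2 then ρ (k + 1) * ((k + 1 : ℝ) ^ p : ℝ) * dft n f (k + 1) else 0 := by
  simp only [cauchyPoly, finsetSum_coeff, coeff_C_mul_X_pow, Finset.sum_ite_eq,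
    Finset.mem_range]

theorem natDegree_cauchyPoly_le (n : ℕ) (p : ℝ) (ρ : ℝ → ℂ) (f : Fin n → ℂ) :
    (cauchyPoly n p ρ f).natDegree ≤ n / 2 - 1 :=
  natDegree_sum_le_of_forall_le _ _ fun k hk =>
    (natDegree_C_mul_X_pow_le _ _).trans (by rw [Finset.mem_range] at hk; omega)

theorem cauchyPoly_eq_C_mul_iff {n : ℕ} {p : ℝ} {ρ : ℝ → ℂ} (hρ : ∀ x, 0 ≤ x → ρ x ≠ 0)
    (f g : Fin n → ℂ) (e : ℂ) :
    cauchyPoly n p ρ f = C e * cauchyPoly n p ρ g ↔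
      ∀ k < n / 2, dft n f (k + 1) = e * dft n g (k + 1) := by
  simp only [Polynomial.ext_iff, coeff_C_mul, coeff_cauchyPoly]
  constructor
  · intro h k hk
    have hw : ρ (k + 1) * ((k + 1 : ℝ) ^ p : ℝ) ≠ 0 :=
      mul_ne_zero (hρ _ (by positivity)) (Complex.ofReal_ne_zero.mpr (by positivity))
    apply mul_left_cancel₀ hw
    have hk' := h k
    rw [if_pos hk, if_pos hk] at hk'
    linear_combination hk'
  · intro h k
    split_ifs with hk
    · rw [h k hk]
      ring
    · rw [mul_zero]

def circlePoint (n : ℕ) (r : ℝ) (s : Fin n) : ℂ := r * Complex.exp (2 * π * I / n) ^ (s : ℕ)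

theorem circlePoint_pow (n : ℕ) (r : ℝ) (s : Fin n) (k : ℕ) :
    circlePoint n r s ^ k = (r : ℂ) ^ k * Complex.exp (2 * π * I * k * (s : ℕ) / n) := by
  rw [circlePoint, mul_pow, ← pow_mul, ← Complex.exp_nat_mul]
  congr 2
  push_cast
  ring

theorem norm_circlePoint {n : ℕ} (hn : 0 < n) (r : ℝ) (s : Fin n) :
    ‖circlePoint n r s‖ = |r| := by
  simp [circlePoint, (Complex.isPrimitiveRoot_exp n hn.ne').norm'_eq_one hn.ne']

theorem circlePoint_injective {n : ℕ} (hn : 0 < n) {r : ℝ} (hr : r ≠ 0) :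
    Function.Injective (circlePoint n r) := fun s s' h =>
  Fin.ext ((Complex.isPrimitiveRoot_exp n hn.ne').pow_inj s.2 s'.2
    (mul_left_cancel₀ (Complex.ofReal_ne_zero.mpr hr) h))

theorem dConv_eq {n : ℕ} {a p : ℝ} (ha : 0 < a) (hp : 0 < p) {ρ : ℝ → ℂ}
    (hρ : ∀ x, 0 ≤ x → ρ (a * x) = ρ x) (j : ℤ) (f : Fin n → ℂ) (s : Fin n) :
    dConv n a p ρ j f s = ((a ^ j) ^ p : ℝ) / n * (circlePoint n (Real.exp (-a ^ j)) s *
      (cauchyPoly n p ρ f).eval (circlePoint n (Real.exp (-a ^ j)) s)) := by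
  rw [dConv, idft, sum_freqs_eq_sum_range fun k hk => by
      rw [dCauchyHat_of_nonpos hp ρ j hk, mul_zero, zero_mul],
    cauchyPoly, eval_finsetSum, Finset.mul_sum, Finset.mul_sum, Finset.mul_sum]
  refine Finset.sum_congr rfl fun k _ => ?_
  simp only [dCauchyHat_natCast_add_one ha hρ, eval_mul, eval_C, eval_pow, eval_X]
  rw [mul_left_comm (circlePoint _ _ _), ← pow_succ', circlePoint_pow]
  push_cast
  ring

theorem norm_dConv_eq_iff {n : ℕ} (hn : 0 < n) {a p : ℝ} (ha : 0 < a) (hp : 0 < p) {ρ : ℝ → ℂ}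
    (hρ : ∀ x, 0 ≤ x → ρ (a * x) = ρ x) (j : ℤ) (f g : Fin n → ℂ) :
    (∀ s, ‖dConv n a p ρ j f s‖ = ‖dConv n a p ρ j g s‖) ↔
      ∀ s, ‖(cauchyPoly n p ρ f).eval (circlePoint n (Real.exp (-a ^ j)) s)‖ =
        ‖(cauchyPoly n p ρ g).eval (circlePoint n (Real.exp (-a ^ j)) s)‖ := by
  have hfactor :
      ∀ s, ‖((a ^ j) ^ p : ℝ) / (n : ℂ) * circlePoint n (Real.exp (-a ^ j)) s‖ ≠ 0 := by
    intro s
    rw [norm_mul, norm_circlePoint hn]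
    have : (0 : ℝ) < (a ^ j) ^ p := by positivity
    simp [this.ne', hn.ne', (Real.exp_pos _).ne']
  simp only [dConv_eq ha hp hρ, ← mul_assoc, norm_mul (_ * circlePoint _ _ _),
    mul_right_inj' (hfactor _)]

theorem mul_conjReflect_cauchyPoly_eq_of_norm_dConv_eq {n : ℕ} (hn : 0 < n) {a p : ℝ}
    (ha : 0 < a) (hp : 0 < p) {ρ : ℝ → ℂ} (hρ : ∀ x, 0 ≤ x → ρ (a * x) = ρ x) (j : ℤ)
    {f g : Fin n → ℂ} (h : ∀ s, ‖dConv n a p ρ j f s‖ = ‖dConv n a p ρ j g s‖) :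
    cauchyPoly n p ρ f * conjReflect (n / 2 - 1) (Real.exp (-a ^ j) ^ 2) (cauchyPoly n p ρ f) =
      cauchyPoly n p ρ g * conjReflect (n / 2 - 1) (Real.exp (-a ^ j) ^ 2) (cauchyPoly n p ρ g) :=
  mul_conjReflect_eq_of_norm_eval_eq (natDegree_cauchyPoly_le n p ρ f)
    (natDegree_cauchyPoly_le n p ρ g) (by rw [Fintype.card_fin]; omega)
    (circlePoint_injective hn (Real.exp_pos _).ne')
    (fun s => by rw [norm_circlePoint hn, abs_of_pos (Real.exp_pos _)])
    ((norm_dConv_eq_iff hn ha hp hρ j f g).mp h)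

theorem stmt3_general (n : ℕ) (hn0 : 0 < n) (a p : ℝ) (ha : 1 < a) (hp : 0 < p)
    (ρ : ℝ → ℂ) (hρ_per : ∀ x : ℝ, 0 ≤ x → ρ (a * x) = ρ x)
    (hρ_ne : ∀ x : ℝ, 0 ≤ x → ρ x ≠ 0)
    (f g : Fin n → ℂ) (j l : ℤ) (hjl : j ≠ l) :
    ((∀ s : Fin n, ‖dConv n a p ρ j f s‖ = ‖dConv n a p ρ j g s‖) ∧
     (∀ s : Fin n, ‖dConv n a p ρ l f s‖ = ‖dConv n a p ρ l g s‖)) ↔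
    (∃ (φ : ℝ) (c : ℂ), ∀ s : Fin n,
      dAnalyticPart n f s = Complex.exp (Complex.I * φ) * dAnalyticPart n g s + c) := by
  have ha0 : 0 < a := zero_lt_one.trans ha
  have hrjl : Real.exp (-a ^ j) ^ 2 ≠ Real.exp (-a ^ l) ^ 2 := fun h =>
    hjl (zpow_right_injective₀ ha0 ha.ne' (neg_injective (Real.exp_injective
      ((pow_left_inj₀ (Real.exp_pos _).le (Real.exp_pos _).le two_ne_zero).mp h))))
  rw [exists_congr fun φ => (exists_dAnalyticPart_eq_iff hn0 f g _).trans
    (cauchyPoly_eq_C_mul_iff hρ_ne f g _).symm]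
  constructor
  · rintro ⟨hj, hl⟩
    exact exists_eq_C_exp_mul_of_mul_conjReflect_eq (natDegree_cauchyPoly_le n p ρ f)
      (natDegree_cauchyPoly_le n p ρ g) (by positivity) (by positivity) hrjl
      (mul_conjReflect_cauchyPoly_eq_of_norm_dConv_eq hn0 ha0 hp hρ_per j hj)
      (mul_conjReflect_cauchyPoly_eq_of_norm_dConv_eq hn0 ha0 hp hρ_per l hl)
  · rintro ⟨φ, hφ⟩
    have hall : ∀ i s, ‖dConv n a p ρ i f s‖ = ‖dConv n a p ρ i g s‖ := fun i => by
      rw [norm_dConv_eq_iff hn0 ha0 hp hρ_per, hφ]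
      simp [Complex.norm_exp_I_mul_ofReal]
    exact ⟨hall j, hall l⟩

/-- **Discrete uniqueness theorem for the Cauchy wavelet transform.**
For `n` even and discrete Cauchy wavelets, the moduli of the wavelet transforms of
`f, g ∈ ℂⁿ` agree at two distinct scales `j ≠ l` if and only if the analytic parts
satisfy `f₊ = e^{iφ} g₊ + c` for some `φ ∈ ℝ`, `c ∈ ℂ`. -/
theorem stmt3 (n : ℕ) (hn : Even n) (hn0 : 0 < n) (a p : ℝ) (ha : 1 < a) (hp : 0 < p)
    (ρ : ℝ → ℂ) (hρ_per : ∀ x : ℝ, 0 ≤ x → ρ (a * x) = ρ x)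
    (hρ_ne : ∀ x : ℝ, 0 ≤ x → ρ x ≠ 0)
    (f g : Fin n → ℂ) (j l : ℤ) (hjl : j ≠ l) :
    ((∀ s : Fin n, ‖dConv n a p ρ j f s‖ = ‖dConv n a p ρ j g s‖) ∧
     (∀ s : Fin n, ‖dConv n a p ρ l f s‖ = ‖dConv n a p ρ l g s‖)) ↔
    (∃ (φ : ℝ) (c : ℂ), ∀ s : Fin n,
      dAnalyticPart n f s = Complex.exp (Complex.I * φ) * dAnalyticPart n g s + c) :=
  stmt3_general n hn0 a p ha hp ρ hρ_per hρ_ne f g j l hjl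
end
end

section
/- Let F, G be polynomials with complex coefficients, let a > 1, and let j ≠ l be integers. Suppose F(e^{-a^j} z) · conj(F)(e^{-a^j}/z) = G(e^{-a^j} z) · conj(G)(e^{-a^j}/z) and F(e^{-a^l} z) · conj(F)(e^{-a^l}/z) = G(e^{-a^l} z) · conj(G)(e^{-a^l}/z) for all z ∈ ℂ \ {0}. Then F = e^{iφ} G for some φ ∈ ℝ. -/
open Complex Polynomial

/-! Write `P*` for the polynomial with conjugated coefficients. After the substitution `w = r z`
the hypotheses read `F(w) F*(ρ/w) = G(w) G*(ρ/w)` for `w ≠ 0`, at `ρ = r²` and at `σ = s²`.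
Comparing the second one at `μ w`, `μ = σ/ρ`, with the first one at `w` eliminates `F*` and
leaves `G*(ρ/w) (G(w) F(μw) - F(w) G(μw)) = 0`, hence the polynomial identity
`G(X) F(μX) = F(X) G(μX)`. Since `μ > 0` and `μ ≠ 1`, its powers are pairwise distinct, and
comparing leading coefficients forces `F = c G`; the hypothesis then gives `c c̄ = 1`. -/

namespace Polynomial

variable {K : Type*} [Field K]

theorem eq_zero_of_forall_eval_mul_eval_div_eq_zero [Infinite K] {p q : K[X]} {c : K}
    (hq : q ≠ 0) (hc : c ≠ 0) (h : ∀ w ≠ 0, p.eval w * q.eval (c / w) = 0) : p = 0 := by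
  have hdiv : Function.Injective (c / · : K → K) := fun x y hxy => by
    simpa [div_eq_mul_inv, hc] using hxy
  have hbad : {w : K | w = 0 ∨ q.IsRoot (c / w)}.Finite :=
    (Set.finite_singleton 0).union ((finite_setOfPred_isRoot hq).preimage hdiv.injOn)
  refine eq_zero_of_infinite_isRoot p (hbad.infinite_compl.mono fun w hw => ?_)
  simp only [Set.mem_compl_iff, Set.mem_ofPred_eq, not_or] at hw
  exact (mul_eq_zero.mp (h w hw.1)).resolve_right hw.2

theorem forall_eval_mul_eval_sq_div_of_forall {F G A B : K[X]} {r : K} (hr : r ≠ 0)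
    (h : ∀ z ≠ 0, F.eval (r * z) * A.eval (r / z) = G.eval (r * z) * B.eval (r / z)) :
    ∀ w ≠ 0, F.eval w * A.eval (r ^ 2 / w) = G.eval w * B.eval (r ^ 2 / w) := by
  intro w hw
  have := h (w / r) (div_ne_zero hw hr)
  rwa [mul_div_cancel₀ w hr, div_div_eq_mul_div, ← sq] at this

theorem mul_comp_C_mul_X_eq_of_forall_eval [Infinite K] {F G A B : K[X]} {ρ σ : K}
    (hρ : ρ ≠ 0) (hσ : σ ≠ 0) (hB : B ≠ 0)
    (hFGρ : ∀ w ≠ 0, F.eval w * A.eval (ρ / w) = G.eval w * B.eval (ρ / w))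
    (hFGσ : ∀ w ≠ 0, F.eval w * A.eval (σ / w) = G.eval w * B.eval (σ / w)) :
    G * F.comp (C (σ / ρ) * X) = F * G.comp (C (σ / ρ) * X) := by
  rw [← sub_eq_zero]
  refine eq_zero_of_forall_eval_mul_eval_div_eq_zero hB hρ fun w hw => ?_
  have hσw := hFGσ (σ / ρ * w) (mul_ne_zero (div_ne_zero hσ hρ) hw)
  rw [show σ / (σ / ρ * w) = ρ / w by field_simp] at hσw
  simp only [eval_sub, eval_mul, eval_comp, eval_C, eval_X]
  linear_combination F.eval w * hσw - F.eval (σ / ρ * w) * hFGρ w hw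

theorem leadingCoeff_comp_C_mul_X (p : K[X]) {μ : K} (hμ : μ ≠ 0) :
    (p.comp (C μ * X)).leadingCoeff = p.leadingCoeff * μ ^ p.natDegree := by
  rw [leadingCoeff_comp (by rw [natDegree_C_mul_X μ hμ]; exact one_ne_zero), leadingCoeff_C_mul_X]

section Dilation

variable {P Q : K[X]} {μ : K}

theorem natDegree_eq_of_mul_comp_C_mul_X_eq (hμ : Function.Injective (μ ^ · : ℕ → K))
    (h : Q * P.comp (C μ * X) = P * Q.comp (C μ * X)) (hP : P ≠ 0) (hQ : Q ≠ 0) :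
    P.natDegree = Q.natDegree := by
  have hμ0 : μ ≠ 0 := by
    rintro rfl
    exact absurd (@hμ 1 2 (by simp)) (by norm_num)
  have hlead := congrArg leadingCoeff h
  simp only [leadingCoeff_mul, leadingCoeff_comp_C_mul_X _ hμ0] at hlead
  apply hμ
  apply mul_left_cancel₀ (mul_ne_zero (leadingCoeff_ne_zero.2 hQ) (leadingCoeff_ne_zero.2 hP))
  linear_combination hlead

theorem leadingCoeff_smul_eq_of_mul_comp_C_mul_X_eq (hμ : Function.Injective (μ ^ · : ℕ → K))
    (h : Q * P.comp (C μ * X) = P * Q.comp (C μ * X)) :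
    Q.leadingCoeff • P = P.leadingCoeff • Q := by
  rcases eq_or_ne P 0 with rfl | hP
  · simp
  rcases eq_or_ne Q 0 with rfl | hQ
  · simp
  set D := Q.leadingCoeff • P - P.leadingCoeff • Q with hD
  have hDQ : Q * D.comp (C μ * X) = D * Q.comp (C μ * X) := by
    simp only [hD, smul_eq_C_mul, sub_comp, mul_comp, C_comp]
    linear_combination C Q.leadingCoeff * h
  rw [← sub_eq_zero, ← hD]
  by_contra hD0
  -- `D` satisfies the same identity, so it has the degree of `Q`, where its coefficient cancels.
  apply leadingCoeff_ne_zero.2 hD0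
  rw [leadingCoeff, natDegree_eq_of_mul_comp_C_mul_X_eq hμ hDQ hD0 hQ, hD, coeff_sub,
    coeff_smul, coeff_smul, coeff_natDegree, ← natDegree_eq_of_mul_comp_C_mul_X_eq hμ h hP hQ,
    coeff_natDegree, smul_eq_mul, smul_eq_mul, mul_comm, sub_self]

end Dilation

theorem eq_C_mul_of_leadingCoeff_smul_eq {P Q : K[X]} (hQ : Q ≠ 0)
    (h : Q.leadingCoeff • P = P.leadingCoeff • Q) :
    P = C (P.leadingCoeff / Q.leadingCoeff) * Q := by
  have hq := leadingCoeff_ne_zero.2 hQ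
  rw [div_eq_inv_mul, C_mul, mul_assoc, ← smul_eq_C_mul, ← smul_eq_C_mul, ← h, smul_smul,
    inv_mul_cancel₀ hq, one_smul]

theorem mul_eq_one_of_forall_eval_C_mul [Infinite K] {G B : K[X]} {c d ρ : K} (hG : G ≠ 0)
    (hB : B ≠ 0) (hρ : ρ ≠ 0)
    (h : ∀ w ≠ 0, (C c * G).eval w * (C d * B).eval (ρ / w) = G.eval w * B.eval (ρ / w)) :
    c * d = 1 := by
  have hzero : C (c * d - 1) * G = 0 :=
    eq_zero_of_forall_eval_mul_eval_div_eq_zero hB hρ fun w hw => by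
      have := h w hw
      simp only [eval_mul, eval_C] at this ⊢
      linear_combination this
  rw [mul_eq_zero, C_eq_zero, sub_eq_zero] at hzero
  exact hzero.resolve_right hG

end Polynomial

theorem Complex.ofReal_pow_injective {x : ℝ} (hx₀ : 0 < x) (hx₁ : x ≠ 1) :
    Function.Injective ((x : ℂ) ^ · : ℕ → ℂ) := fun m n hmn =>
  pow_right_injective₀ hx₀ hx₁ (by simpa only [← ofReal_pow, ofReal_inj] using hmn)

theorem Complex.exists_eq_exp_I_mul_of_mul_conj_eq_one {c : ℂ} (hc : c * starRingEnd ℂ c = 1) :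
    ∃ φ : ℝ, c = exp (I * φ) := by
  rw [mul_conj'] at hc
  have hnorm : ‖c‖ = 1 :=
    (pow_eq_one_iff_of_nonneg (norm_nonneg c) two_ne_zero).1 (by exact_mod_cast hc)
  obtain ⟨φ, hφ⟩ := (norm_eq_one_iff c).1 hnorm
  exact ⟨φ, by rw [← hφ, mul_comm]⟩

/-- **Equality of polynomial "modulus data" on two circles forces equality up to phase.**
If `F(e^{-a^j} z) conj(F)(e^{-a^j}/z) = G(e^{-a^j} z) conj(G)(e^{-a^j}/z)` for all
`z ≠ 0`, and the same at a second scale `l ≠ j`, then `F = e^{iφ} G` for some real `φ`.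
Here `conj(P)` is the polynomial with conjugated coefficients. -/
theorem stmt5 (F G : Polynomial ℂ) (a : ℝ) (ha : 1 < a) (j l : ℤ) (hjl : j ≠ l)
    (h1 : ∀ z : ℂ, z ≠ 0 →
      F.eval ((Real.exp (-(a ^ j)) : ℂ) * z) *
        (F.map (starRingEnd ℂ)).eval ((Real.exp (-(a ^ j)) : ℂ) / z) =
      G.eval ((Real.exp (-(a ^ j)) : ℂ) * z) *
        (G.map (starRingEnd ℂ)).eval ((Real.exp (-(a ^ j)) : ℂ) / z))
    (h2 : ∀ z : ℂ, z ≠ 0 →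
      F.eval ((Real.exp (-(a ^ l)) : ℂ) * z) *
        (F.map (starRingEnd ℂ)).eval ((Real.exp (-(a ^ l)) : ℂ) / z) =
      G.eval ((Real.exp (-(a ^ l)) : ℂ) * z) *
        (G.map (starRingEnd ℂ)).eval ((Real.exp (-(a ^ l)) : ℂ) / z)) :
    ∃ φ : ℝ, F = Polynomial.C (Complex.exp (Complex.I * φ)) * G := by
  set r : ℝ := Real.exp (-(a ^ j))
  set s : ℝ := Real.exp (-(a ^ l))
  have hr0 : (r : ℂ) ≠ 0 := ofReal_ne_zero.2 (Real.exp_pos _).ne'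
  have hs0 : (s : ℂ) ≠ 0 := ofReal_ne_zero.2 (Real.exp_pos _).ne'
  have hr := pow_ne_zero 2 hr0
  have hs := pow_ne_zero 2 hs0
  have hFGr := forall_eval_mul_eval_sq_div_of_forall hr0 h1
  have hFGs := forall_eval_mul_eval_sq_div_of_forall hs0 h2
  rcases eq_or_ne G 0 with rfl | hG
  · have hF : F = 0 := by
      by_contra hF
      exact hF <|
        eq_zero_of_forall_eval_mul_eval_div_eq_zero (map_ne_zero hF) hr (by simpa using hFGr)
    exact ⟨0, by simp [hF]⟩
  have hμ : Function.Injective (((s : ℂ) ^ 2 / (r : ℂ) ^ 2) ^ · : ℕ → ℂ) := by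
    have hsr : s ^ 2 / r ^ 2 ≠ 1 := by
      rw [Ne, div_eq_one_iff_eq (by positivity),
        pow_left_inj₀ (by positivity) (by positivity) two_ne_zero, Real.exp_eq_exp, neg_inj]
      exact (zpow_right_injective₀ (by linarith) ha.ne').ne hjl.symm
    exact_mod_cast ofReal_pow_injective (by positivity) hsr
  have hFG := eq_C_mul_of_leadingCoeff_smul_eq hG <|
    leadingCoeff_smul_eq_of_mul_comp_C_mul_X_eq hμ <|
      mul_comp_C_mul_X_eq_of_forall_eval hr hs (map_ne_zero hG) hFGr hFGs
  rw [hFG, Polynomial.map_mul, map_C] at hFGr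
  obtain ⟨φ, hφ⟩ := exists_eq_exp_I_mul_of_mul_conj_eq_one <|
    mul_eq_one_of_forall_eval_C_mul hG (map_ne_zero hG) hr hFGr
  exact ⟨φ, by rw [hFG, hφ]⟩
end

section
/- Let a < b, M > 0, and for z in the band {a < Im z < b} with |Re z| ≤ M and t = (Im z - a)/(b - a), define f(z) = (1/π) arg((e^{πM/(b-a)} - e^{π(z-ia)/(b-a)})/(e^{-πM/(b-a)} - e^{π(z-ia)/(b-a)})). Then f(z) ≥ (1-t) - 2t · e^{-π(M-|Re z|)/(b-a)}/(1 - e^{-π(M-|Re z|)/(b-a)}), provided M > |Re z|. -/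
open Complex Real

noncomputable section

/-- The harmonic-measure function
`f(z) = (1/π) arg((e^{πM/(b-a)} - e^{π(z-ia)/(b-a)}) / (e^{-πM/(b-a)} - e^{π(z-ia)/(b-a)}))`
of the boundary segment `{Im z = a, |Re z| < M}` in the band `{a < Im z < b}`. -/
def fband (a b M : ℝ) (z : ℂ) : ℝ :=
  (1 / π) * Complex.arg
    ((Complex.exp ((π * M / (b - a) : ℝ) : ℂ) -
        Complex.exp ((π : ℂ) * (z - (a : ℂ) * Complex.I) / ((b : ℂ) - (a : ℂ)))) /
     (Complex.exp ((-(π * M) / (b - a) : ℝ) : ℂ) -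
        Complex.exp ((π : ℂ) * (z - (a : ℂ) * Complex.I) / ((b : ℂ) - (a : ℂ)))))

open ComplexConjugate

/-! With `ζ = e^{x + iθ}`, `u = e^{x - m}` and `v = e^{-(m + x)}`, the numerator factors as
`e^m (1 - u e^{iθ})` and, since `|e^{iθ}| = 1`, the denominator as `-ζ · conj (1 - v e^{iθ})`.
So the argument of the quotient is `π - θ + arg (1 - u e^{iθ}) + arg (1 - v e^{iθ})`, and for
`0 ≤ w < 1` each correction satisfies `|arg p| ≤ |Im p / Re p| = w |sin θ| / (1 - w cos θ)`,
which is at most `θ w / (1 - w)`; here `u, v ≤ e^{-(m - |x|)}`. Scaling by `π / (b - a)` turns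
`fband` into this quotient with `θ = π t`. -/

theorem abs_arg_le_abs_im_div_re {z : ℂ} (hz : 0 < z.re) : |arg z| ≤ |z.im / z.re| := by
  have hφ : |arg z| < π / 2 := abs_arg_lt_pi_div_two_iff.2 (Or.inl hz)
  rw [← tan_arg]
  rcases le_total 0 (arg z) with h | h
  · rw [abs_of_nonneg h] at hφ ⊢
    exact (le_tan h hφ).trans (le_abs_self _)
  · rw [abs_of_nonpos h] at hφ ⊢
    rw [← abs_neg, ← Real.tan_neg]
    exact (le_tan (neg_nonneg.2 h) hφ).trans (le_abs_self _)

theorem re_one_sub_mul_exp (w θ : ℝ) : (1 - w * cexp (θ * I)).re = 1 - w * Real.cos θ := by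
  simp [exp_ofReal_mul_I_re]

theorem im_one_sub_mul_exp (w θ : ℝ) : (1 - w * cexp (θ * I)).im = -(w * Real.sin θ) := by
  simp [exp_ofReal_mul_I_im]

section OneSubMulExp

variable {w θ : ℝ}

theorem re_one_sub_mul_exp_pos (hw0 : 0 ≤ w) (hw1 : w < 1) : 0 < (1 - w * cexp (θ * I)).re := by
  rw [re_one_sub_mul_exp]
  nlinarith [Real.cos_le_one θ]

theorem abs_arg_one_sub_mul_exp_le (hw0 : 0 ≤ w) (hw1 : w < 1) :
    |arg (1 - w * cexp (θ * I))| ≤ |θ| * (w / (1 - w)) := by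
  refine (abs_arg_le_abs_im_div_re (re_one_sub_mul_exp_pos hw0 hw1)).trans ?_
  have hden := re_one_sub_mul_exp_pos (θ := θ) hw0 hw1
  rw [re_one_sub_mul_exp] at hden
  rw [re_one_sub_mul_exp, im_one_sub_mul_exp, abs_div, abs_of_pos hden, abs_neg, abs_mul,
    abs_of_nonneg hw0, div_le_iff₀ hden]
  calc w * |Real.sin θ| ≤ |θ| * w := by
        rw [mul_comm]; exact mul_le_mul_of_nonneg_right abs_sin_le_abs hw0
    _ = |θ| * (w / (1 - w)) * (1 - w) := by field_simp [(sub_pos.2 hw1).ne']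
    _ ≤ |θ| * (w / (1 - w)) * (1 - w * Real.cos θ) := by
        gcongr
        exact mul_le_of_le_one_right hw0 (Real.cos_le_one θ)

theorem arg_one_sub_mul_exp_nonpos (hw0 : 0 ≤ w) (hw1 : w < 1) (hθ : 0 ≤ Real.sin θ) :
    arg (1 - w * cexp (θ * I)) ≤ 0 := by
  have him : (1 - w * cexp (θ * I)).im ≤ 0 := by
    rw [im_one_sub_mul_exp]; exact neg_nonpos.2 (mul_nonneg hw0 hθ)
  rcases him.lt_or_eq with h | h
  · exact (arg_neg_iff.2 h).le
  · exact (arg_eq_zero_iff.2 ⟨(re_one_sub_mul_exp_pos hw0 hw1).le, h⟩).le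

end OneSubMulExp

theorem exp_sub_exp_add_mul_I (m x θ : ℝ) :
    cexp m - cexp (x + θ * I) = rexp m * (1 - rexp (x - m) * cexp (θ * I)) := by
  have h : (rexp m : ℂ) * rexp (x - m) = rexp x := by
    rw [← ofReal_mul, ← Real.exp_add]; ring_nf
  rw [Complex.exp_add, ← ofReal_exp, ← ofReal_exp]
  linear_combination cexp (θ * I) * h

theorem exp_neg_sub_exp_add_mul_I (m x θ : ℝ) :
    cexp (-m) - cexp (x + θ * I) =
      -(rexp x * cexp (θ * I)) * conj (1 - rexp (-(m + x)) * cexp (θ * I)) := by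
  have hE : cexp (θ * I) * conj (cexp (θ * I)) = 1 := by
    rw [← exp_conj, ← Complex.exp_add]; simp
  have h : (rexp x : ℂ) * rexp (-(m + x)) = rexp (-m) := by
    rw [← ofReal_mul, ← Real.exp_add]; ring_nf
  rw [Complex.exp_add, ← ofReal_neg, ← ofReal_exp, ← ofReal_exp]
  simp only [map_sub, map_one, map_mul, conj_ofReal]
  linear_combination (-1 : ℂ) * h - rexp x * rexp (-(m + x)) * hE

theorem coe_arg_real_mul_div_neg_mul_conj {r ρ θ : ℝ} {p q : ℂ} (hr : 0 < r) (hρ : 0 < ρ)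
    (hθ : θ ∈ Set.Ioc (-π) π) (hp : p ≠ 0) (hq : q ≠ 0) :
    (arg (r * p / (-(ρ * cexp (θ * I)) * conj q)) : Real.Angle) = ↑(π - θ + arg p + arg q) := by
  have hζ : (ρ : ℂ) * cexp (θ * I) ≠ 0 := mul_ne_zero (ofReal_ne_zero.2 hρ.ne') (exp_ne_zero _)
  have hq' : conj q ≠ 0 := (map_ne_zero _).2 hq
  rw [arg_div_coe_angle (mul_ne_zero (ofReal_ne_zero.2 hr.ne') hp)
      (mul_ne_zero (neg_ne_zero.2 hζ) hq'), arg_real_mul _ hr,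
    arg_mul_coe_angle (neg_ne_zero.2 hζ) hq', arg_neg_coe_angle hζ, arg_real_mul _ hρ,
    arg_conj_coe_angle, exp_mul_I, arg_cos_add_sin_mul_I hθ,
    show π - θ + arg p + arg q = arg p - (θ + π - arg q) + 2 * π by ring]
  simp only [Real.Angle.coe_add, Real.Angle.coe_sub, Real.Angle.coe_two_pi, add_zero]
  abel

theorem arg_exp_sub_div_exp_sub {m x θ : ℝ} (hx : |x| < m) (hθ0 : 0 ≤ θ) (hθπ : θ ≤ π) :
    arg ((cexp m - cexp (x + θ * I)) / (cexp (-m) - cexp (x + θ * I))) =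
      π - θ + arg (1 - rexp (x - m) * cexp (θ * I)) +
        arg (1 - rexp (-(m + x)) * cexp (θ * I)) := by
  obtain ⟨hxm, hmx⟩ := abs_lt.1 hx
  have hu : rexp (x - m) < 1 := Real.exp_lt_one_iff.2 (by linarith)
  have hv : rexp (-(m + x)) < 1 := Real.exp_lt_one_iff.2 (by linarith)
  set p₁ := 1 - rexp (x - m) * cexp (θ * I)
  set p₂ := 1 - rexp (-(m + x)) * cexp (θ * I)
  have hp₁ : 0 < p₁.re := re_one_sub_mul_exp_pos (Real.exp_nonneg _) hu
  have hp₂ : 0 < p₂.re := re_one_sub_mul_exp_pos (Real.exp_nonneg _) hv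
  -- Both factors lie in the closed fourth quadrant, so no reduction mod `2π` occurs.
  have hS : π - θ + arg p₁ + arg p₂ ∈ Set.Ioc (-π) π := by
    have hsin : 0 ≤ Real.sin θ := Real.sin_nonneg_of_nonneg_of_le_pi hθ0 hθπ
    have h₁ := abs_lt.1 (abs_arg_lt_pi_div_two_iff.2 (Or.inl hp₁))
    have h₂ := abs_lt.1 (abs_arg_lt_pi_div_two_iff.2 (Or.inl hp₂))
    have h₁' := arg_one_sub_mul_exp_nonpos (Real.exp_nonneg (x - m)) hu hsin
    have h₂' := arg_one_sub_mul_exp_nonpos (Real.exp_nonneg (-(m + x))) hv hsin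
    constructor <;> linarith
  have hangle := coe_arg_real_mul_div_neg_mul_conj (Real.exp_pos m) (Real.exp_pos x)
    ⟨by linarith [pi_pos], hθπ⟩ (fun h ↦ by simp [h] at hp₁ : p₁ ≠ 0)
    (fun h ↦ by simp [h] at hp₂ : p₂ ≠ 0)
  rwa [← exp_sub_exp_add_mul_I, ← exp_neg_sub_exp_add_mul_I, arg_coe_angle_eq_iff_eq_toReal,
    Real.Angle.toReal_coe_eq_self_iff_mem_Ioc.2 hS] at hangle

theorem le_arg_exp_sub_div_exp_sub {m x θ : ℝ} (hx : |x| < m) (hθ0 : 0 ≤ θ) (hθπ : θ ≤ π) :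
    π - θ - 2 * θ * rexp (-(m - |x|)) / (1 - rexp (-(m - |x|))) ≤
      arg ((cexp m - cexp (x + θ * I)) / (cexp (-m) - cexp (x + θ * I))) := by
  set s := rexp (-(m - |x|))
  have hs : s < 1 := Real.exp_lt_one_iff.2 (by linarith)
  have hbound : ∀ w, 0 ≤ w → w ≤ s → -(θ * (s / (1 - s))) ≤ arg (1 - w * cexp (θ * I)) := by
    intro w hw0 hws
    have hw1 : w < 1 := hws.trans_lt hs
    have hmono : w / (1 - w) ≤ s / (1 - s) :=
      div_le_div₀ (hw0.trans hws) hws (sub_pos.2 hs) (by linarith)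
    have habs := abs_arg_one_sub_mul_exp_le (θ := θ) hw0 hw1
    rw [abs_of_nonneg hθ0] at habs
    nlinarith [neg_abs_le (arg (1 - w * cexp (θ * I)))]
  have h₁ := hbound (rexp (x - m)) (Real.exp_nonneg _)
    (Real.exp_le_exp.2 (by linarith [le_abs_self x]))
  have h₂ := hbound (rexp (-(m + x))) (Real.exp_nonneg _)
    (Real.exp_le_exp.2 (by linarith [neg_abs_le x]))
  rw [arg_exp_sub_div_exp_sub hx hθ0 hθπ]
  linarith [show 2 * θ * s / (1 - s) = 2 * (θ * (s / (1 - s))) by ring]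

theorem fband_eq_arg (a b M : ℝ) (z : ℂ) :
    fband a b M z = 1 / π * arg
      ((cexp ↑(π * M / (b - a)) -
          cexp (↑(π * z.re / (b - a)) + ↑(π * (z.im - a) / (b - a)) * I)) /
        (cexp (-↑(π * M / (b - a))) -
          cexp (↑(π * z.re / (b - a)) + ↑(π * (z.im - a) / (b - a)) * I))) := by
  have h : (π : ℂ) * (z - a * I) / (b - a) =
      ↑(π * z.re / (b - a)) + ↑(π * (z.im - a) / (b - a)) * I := by
    conv_lhs => rw [← re_add_im z]
    push_cast
    ring
  rw [fband, h, neg_div, ofReal_neg]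

theorem stmt14_general (a b M : ℝ) (hab : a < b) (z : ℂ) (t : ℝ)
    (hz1 : a < z.im) (hz2 : z.im < b) (hre : |z.re| < M)
    (ht : t = (z.im - a) / (b - a)) :
    fband a b M z ≥ (1 - t) -
      2 * t * Real.exp (-π * (M - |z.re|) / (b - a)) /
        (1 - Real.exp (-π * (M - |z.re|) / (b - a))) := by
  have hba : 0 < b - a := sub_pos.2 hab
  have hθ : π * (z.im - a) / (b - a) = π * t := by rw [ht]; ring
  have ht0 : 0 ≤ t := by rw [ht]; exact div_nonneg (by linarith) hba.le
  have ht1 : t ≤ 1 := by rw [ht, div_le_one hba]; linarith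
  have habs : |π * z.re / (b - a)| = π * |z.re| / (b - a) := by
    rw [abs_div, abs_mul, abs_of_pos pi_pos, abs_of_pos hba]
  have hx : |π * z.re / (b - a)| < π * M / (b - a) := by
    rw [habs]; gcongr
  have key := le_arg_exp_sub_div_exp_sub (θ := π * t) hx (by positivity)
    (mul_le_of_le_one_right pi_pos.le ht1)
  rw [habs, show -(π * M / (b - a) - π * |z.re| / (b - a)) = -π * (M - |z.re|) / (b - a) by ring]
    at key
  rw [fband_eq_arg, ge_iff_le, hθ]
  set s := rexp (-π * (M - |z.re|) / (b - a))
  calc 1 - t - 2 * t * s / (1 - s) = 1 / π * (π - π * t - 2 * (π * t) * s / (1 - s)) := by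
        field_simp
    _ ≤ _ := mul_le_mul_of_nonneg_left key (by positivity)

/-- **Lower bound for the harmonic measure `fband` inside the band.**
For `z` in the band `{a < Im z < b}` with `|Re z| < M` and `t = (Im z - a)/(b - a)`,
`f(z) ≥ (1-t) - 2t e^{-π(M-|Re z|)/(b-a)} / (1 - e^{-π(M-|Re z|)/(b-a)})`. -/
theorem stmt14 (a b M : ℝ) (hab : a < b) (hM : 0 < M) (z : ℂ) (t : ℝ)
    (hz1 : a < z.im) (hz2 : z.im < b) (hre : |z.re| < M)
    (ht : t = (z.im - a) / (b - a)) :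
    fband a b M z ≥ (1 - t) -
      2 * t * Real.exp (-π * (M - |z.re|) / (b - a)) /
        (1 - Real.exp (-π * (M - |z.re|) / (b - a))) :=
  stmt14_general a b M hab z t hz1 hz2 hre ht
end
end
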